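/- If C is a complete admissible uniform clutter on the vertex set X, then the simplicial complex generated by the family {X \ F : F an edge of C} (the complex whose facets are the complements of the edges of C) is pure shellable. -/

import Mathlib

variable {V : Type} [Fintype V] [DecidableEq V]

/-- A clutter: a family of finsets (edges), none of which contains another. -/
def IsClutter (E : Set (Finset V)) : Prop :=
  ∀ e ∈ E, ∀ f ∈ E, e ⊆ f → e = f

/-- A vertex cover: a set of vertices meeting every edge. -/
def IsVertexCover (E : Set (Finset V)) (C : Finset V) : Prop :=
  ∀ e ∈ E, (e ∩ C).Nonempty

/-- A minimal vertex cover. -/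
def IsMinimalVertexCover (E : Set (Finset V)) (C : Finset V) : Prop :=
  IsVertexCover E C ∧ ∀ D ⊂ C, ¬ IsVertexCover E D

/-- The covering number: minimum cardinality of a vertex cover. -/
noncomputable def coveringNumber (E : Set (Finset V)) : ℕ :=
  sInf {n : ℕ | ∃ C : Finset V, IsVertexCover E C ∧ C.card = n}

/-- Unmixed: all minimal vertex covers have the same cardinality. -/
def Unmixed (E : Set (Finset V)) : Prop :=
  ∀ C D : Finset V, IsMinimalVertexCover E C → IsMinimalVertexCover E D →
    C.card = D.card

/-- A matching: a set of pairwise disjoint edges. -/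
def IsMatching (E : Set (Finset V)) (M : Finset (Finset V)) : Prop :=
  ↑M ⊆ E ∧ (M : Set (Finset V)).Pairwise Disjoint

/-- The König property: the maximum size of a matching equals the covering number. -/
def HasKonigProperty (E : Set (Finset V)) : Prop :=
  (∃ M : Finset (Finset V), IsMatching E M ∧ M.card = coveringNumber E) ∧
  ∀ M : Finset (Finset V), IsMatching E M → M.card ≤ coveringNumber E

/-- A perfect matching of König type: pairwise disjoint edges `em 0, …, em (g-1)`
whose union is the whole vertex set, where `g` is the covering number. -/
def IsPerfectMatchingKT (E : Set (Finset V)) {g : ℕ} (em : Fin g → Finset V) : Prop :=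
  (∀ i, em i ∈ E) ∧ (∀ i j, i ≠ j → Disjoint (em i) (em j)) ∧
  (∀ x : V, ∃ i, x ∈ em i) ∧ g = coveringNumber E

/-- An independent set: contains no edge. -/
def IsIndependentSet (E : Set (Finset V)) (F : Finset V) : Prop :=
  ∀ e ∈ E, ¬ e ⊆ F

/-- A facet of the independence complex: a maximal independent set. -/
def IsFacet (E : Set (Finset V)) (F : Finset V) : Prop :=
  IsIndependentSet E F ∧ ∀ G : Finset V, IsIndependentSet E G → F ⊆ G → F = G

/-- The set of facets of the independence complex of a clutter. -/
def cFacets (E : Set (Finset V)) : Set (Finset V) := {F | IsFacet E F}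

/-- `F : Fin s → Finset V` is a shelling order of the family of facets `Fac`. -/
def IsShelling {s : ℕ} (Fac : Set (Finset V)) (F : Fin s → Finset V) : Prop :=
  Function.Injective F ∧ (∀ G : Finset V, G ∈ Fac ↔ ∃ i, F i = G) ∧
  ∀ i j : Fin s, i < j →
    ∃ v ∈ F j \ F i, ∃ l : Fin s, l < j ∧ F j \ F l = {v}

/-- A family of facets is shellable if it admits a shelling order. -/
def Shellable (Fac : Set (Finset V)) : Prop :=
  ∃ (s : ℕ) (F : Fin s → Finset V), IsShelling Fac F

/-- A family of facets is pure if all its members have the same cardinality. -/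
def PureFamily (Fac : Set (Finset V)) : Prop :=
  ∀ F ∈ Fac, ∀ G ∈ Fac, F.card = G.card

/-- Pure shellable: pure and shellable. -/
def PureShellable (Fac : Set (Finset V)) : Prop :=
  PureFamily Fac ∧ Shellable Fac

/-- A free vertex: a vertex belonging to exactly one edge. -/
def HasFreeVertex (E : Set (Finset V)) : Prop :=
  ∃ x : V, ∃ e ∈ E, x ∈ e ∧ ∀ f ∈ E, x ∈ f → f = e

/-- A cycle of length `r`: `r` distinct vertices and `r` distinct edges such that each
of the vertices lies in exactly two of the edges and each of the edges contains exactly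
two of the vertices. -/
def HasCycleOfLength (E : Set (Finset V)) (r : ℕ) : Prop :=
  ∃ (v : Fin r → V) (f : Fin r → Finset V),
    Function.Injective v ∧ Function.Injective f ∧ (∀ j, f j ∈ E) ∧
    (∀ i : Fin r, (Finset.univ.filter (fun j => v i ∈ f j)).card = 2) ∧
    (∀ j : Fin r, (Finset.univ.filter (fun i => v i ∈ f j)).card = 2)

/-- A partition of the vertex set into finsets indexed by `Fin m`. -/
def IsPartitionF {m : ℕ} (P : Fin m → Finset V) : Prop :=
  (∀ i j, i ≠ j → Disjoint (P i) (P j)) ∧ ∀ x : V, ∃ i, x ∈ P i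

/-- An admissible set with respect to the color classes `Xc 0, …, Xc (d-1)` and the
matching classes `em 0, …, em (g-1)`: it meets each color class at most once, it meets
precisely the first `e.card` color classes, and the matching indices of its vertices
are nondecreasing along the color classes. -/
def IsAdmissibleSet {d g : ℕ} (Xc : Fin d → Finset V) (em : Fin g → Finset V)
    (e : Finset V) : Prop :=
  (∀ i, (e ∩ Xc i).card ≤ 1) ∧
  (∀ i : Fin d, ((i : ℕ) < e.card ↔ (e ∩ Xc i).Nonempty)) ∧
  (∀ (i i' : Fin d) (j j' : Fin g) (x y : V),
    x ∈ e ∩ Xc i → y ∈ e ∩ Xc i' → x ∈ em j → y ∈ em j' → i ≤ i' → j ≤ j')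

/-- An admissible clutter: the `em i` are admissible edges and all other edges are
admissible sets not contained in any `em i`. -/
def IsAdmissibleClutter {d g : ℕ} (Xc : Fin d → Finset V) (em : Fin g → Finset V)
    (E : Set (Finset V)) : Prop :=
  IsClutter E ∧ (∀ i, em i ∈ E) ∧ (∀ i, IsAdmissibleSet Xc em (em i)) ∧
  ∀ f ∈ E, (∀ i, f ≠ em i) → IsAdmissibleSet Xc em f ∧ ∀ i, ¬ f ⊆ em i

/-- The complete admissible clutter: the `em i` together with all maximal admissible
sets containing no `em i`. -/
def completeAdmissibleClutter {d g : ℕ} (Xc : Fin d → Finset V)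
    (em : Fin g → Finset V) : Set (Finset V) :=
  Set.range em ∪
    {e | IsAdmissibleSet Xc em e ∧ (∀ i, ¬ em i ⊆ e) ∧
      ∀ e', IsAdmissibleSet Xc em e' → e ⊆ e' → e = e'}

/-- The edge set of the complete admissible uniform clutter: all maximal admissible
sets. -/
def maxAdmissible {d g : ℕ} (Xc : Fin d → Finset V)
    (em : Fin g → Finset V) : Set (Finset V) :=
  {e | IsAdmissibleSet Xc em e ∧ ∀ e', IsAdmissibleSet Xc em e' → e ⊆ e' → e = e'}

/-!
Write `v a i` for the unique vertex of `em a ∩ Xc i`. Every admissible set is contained in an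
edge `{v (f i) i | i}` with `f` monotone (take for `f i` the least matching index of a vertex of
the set in a colour class `≥ i`), and these edges are admissible of the maximal size `d`; so the
edges of the clutter are exactly these "grid edges". Order them by the lexicographic order of `f`.
If `f < f'` first differ at `i`, then `f'` with its value at `i` lowered to `f i` is still
monotone, lexicographically smaller than `f'`, and its edge differs from that of `f'` only in the
vertex `v (f i) i`, which lies in the edge of `f` but not in that of `f'`: passing to complements
this is the shelling condition.
-/

open Function Finset

omit [Fintype V] [DecidableEq V] in
theorem IsPartitionF.eq_of_mem {m : ℕ} {P : Fin m → Finset V} (hP : IsPartitionF P) {x : V}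
    {i j : Fin m} (hi : x ∈ P i) (hj : x ∈ P j) : i = j := by
  by_contra h
  exact disjoint_left.mp (hP.1 i j h) hi hj

omit [Fintype V] in
theorem shellable_range_of_linearOrder {ι : Type*} [Fintype ι] [LinearOrder ι]
    {F : ι → Finset V} (hF : Injective F)
    (h : ∀ i j, i < j → ∃ x ∈ F j \ F i, ∃ l < j, F j \ F l = {x}) :
    Shellable (Set.range F) := by
  let e := Fintype.orderIsoFinOfCardEq ι rfl
  refine ⟨_, F ∘ e, hF.comp e.injective, fun G => Set.mem_range.trans e.surjective.exists,
    fun i j hij => ?_⟩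
  obtain ⟨x, hx, l, hl, hFl⟩ := h _ _ (e.lt_iff_lt.mpr hij)
  obtain ⟨l, rfl⟩ := e.surjective l
  exact ⟨x, hx, l, e.lt_iff_lt.mp hl, hFl⟩

omit [Fintype V] in
theorem PureShellable.of_subsingleton {Fac : Set (Finset V)} (h : Fac.Subsingleton) :
    PureShellable Fac := by
  refine ⟨fun F hF G hG => by rw [h hF hG], ?_⟩
  obtain rfl | ⟨G, rfl⟩ := h.eq_empty_or_singleton
  · rw [← Set.range_eq_empty (Empty.elim : Empty → Finset V)]
    exact shellable_range_of_linearOrder (injective_of_subsingleton _) fun i => i.elim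
  · simpa using shellable_range_of_linearOrder (F := fun _ : Unit => G)
      (injective_of_subsingleton _) (fun i j hij => (hij.ne (Subsingleton.elim i j)).elim)

section Grid

omit [Fintype V]

variable {d g : ℕ} {Xc : Fin d → Finset V} {em : Fin g → Finset V} {v : Fin g → Fin d → V}
  {f : Fin d → Fin g} {e : Finset V} {x : V} {a : Fin g} {i : Fin d}

def gridEdge (v : Fin g → Fin d → V) (f : Fin d → Fin g) : Finset V :=
  univ.image fun i => v (f i) i

theorem mem_gridEdge : x ∈ gridEdge v f ↔ ∃ i, v (f i) i = x := by
  simp [gridEdge]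

theorem apply_mem_gridEdge : v (f i) i ∈ gridEdge v f :=
  mem_gridEdge.mpr ⟨i, rfl⟩

theorem apply_mem_gridEdge_iff (hv : Injective2 v) : v a i ∈ gridEdge v f ↔ f i = a := by
  refine ⟨fun h => ?_, by rintro rfl; exact apply_mem_gridEdge⟩
  obtain ⟨j, hj⟩ := mem_gridEdge.mp h
  obtain ⟨hfa, rfl⟩ := hv hj
  exact hfa

theorem card_gridEdge (hv : Injective2 v) : (gridEdge v f).card = d := by
  rw [gridEdge, card_image_of_injective _ fun i j h => (hv h).2, card_univ, Fintype.card_fin]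

theorem gridEdge_injective (hv : Injective2 v) : Injective (gridEdge v) := fun _ _ h =>
  funext fun _ => ((apply_mem_gridEdge_iff hv).mp (h ▸ apply_mem_gridEdge)).symm

theorem gridEdge_update_sdiff (hv : Injective2 v) (ha : a ≠ f i) :
    gridEdge v (update f i a) \ gridEdge v f = {v a i} := by
  ext x
  simp only [mem_sdiff, mem_singleton]
  constructor
  · rintro ⟨hx, hxf⟩
    obtain ⟨j, rfl⟩ := mem_gridEdge.mp hx
    rcases eq_or_ne j i with rfl | hj
    · rw [update_self]
    · rw [update_of_ne hj] at hxf
      exact (hxf apply_mem_gridEdge).elim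
  · rintro rfl
    refine ⟨(apply_mem_gridEdge_iff hv).mpr (update_self ..), fun h => ha ?_⟩
    exact ((apply_mem_gridEdge_iff hv).mp h).symm

theorem IsAdmissibleSet.card_le (hXc : IsPartitionF Xc) (he : IsAdmissibleSet Xc em e) :
    e.card ≤ d := by
  choose col hcol using hXc.2
  calc e.card ≤ (univ : Finset (Fin d)).card := by
        refine card_le_card_of_injOn col (fun _ _ => mem_univ _) fun x hx y hy h => ?_
        exact card_le_one.mp (he.1 (col x)) x (mem_inter.mpr ⟨hx, hcol x⟩) y
          (mem_inter.mpr ⟨hy, h ▸ hcol y⟩)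
    _ = d := by simp

variable (hv : ∀ a i, em a ∩ Xc i = {v a i})
include hv

theorem mem_em_and_mem_Xc_of_inter_eq (a : Fin g) (i : Fin d) :
    v a i ∈ em a ∧ v a i ∈ Xc i :=
  mem_inter.mp (hv a i ▸ mem_singleton_self _)

theorem eq_of_mem_em_of_mem_Xc (ha : x ∈ em a) (hi : x ∈ Xc i) : x = v a i :=
  mem_singleton.mp (hv a i ▸ mem_inter.mpr ⟨ha, hi⟩)

theorem injective2_of_inter_eq (hXc : IsPartitionF Xc) (hem : IsPartitionF em) :
    Injective2 v := fun a a' i i' h =>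
  ⟨hem.eq_of_mem (mem_em_and_mem_Xc_of_inter_eq hv a i).1
      (h ▸ (mem_em_and_mem_Xc_of_inter_eq hv a' i').1),
    hXc.eq_of_mem (mem_em_and_mem_Xc_of_inter_eq hv a i).2
      (h ▸ (mem_em_and_mem_Xc_of_inter_eq hv a' i').2)⟩

theorem gridEdge_inter (hXc : IsPartitionF Xc) : gridEdge v f ∩ Xc i = {v (f i) i} := by
  ext x
  simp only [mem_inter, mem_singleton, mem_gridEdge]
  constructor
  · rintro ⟨⟨j, rfl⟩, hx⟩
    rw [hXc.eq_of_mem (mem_em_and_mem_Xc_of_inter_eq hv (f j) j).2 hx]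
  · rintro rfl
    exact ⟨⟨i, rfl⟩, (mem_em_and_mem_Xc_of_inter_eq hv (f i) i).2⟩

theorem isAdmissibleSet_gridEdge (hXc : IsPartitionF Xc) (hem : IsPartitionF em)
    (hf : Monotone f) : IsAdmissibleSet Xc em (gridEdge v f) := by
  refine ⟨fun i => ?_, fun i => ?_, fun i i' j j' x y hx hy hxj hyj' hii' => ?_⟩
  · simp [gridEdge_inter hv hXc]
  · simp [gridEdge_inter hv hXc, card_gridEdge (injective2_of_inter_eq hv hXc hem)]
  · rw [gridEdge_inter hv hXc, mem_singleton] at hx hy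
    subst hx hy
    rw [hem.eq_of_mem hxj (mem_em_and_mem_Xc_of_inter_eq hv (f i) i).1,
      hem.eq_of_mem hyj' (mem_em_and_mem_Xc_of_inter_eq hv (f i') i').1]
    exact hf hii'

theorem IsAdmissibleSet.exists_monotone_subset_gridEdge [NeZero g] (hXc : IsPartitionF Xc)
    (hem : IsPartitionF em) (he : IsAdmissibleSet Xc em e) :
    ∃ f : Fin d → Fin g, Monotone f ∧ e ⊆ gridEdge v f := by
  choose idx hidx using hem.2
  let f : Fin d → Fin g := fun i => (e.filter fun y => ∃ i', i ≤ i' ∧ y ∈ Xc i').inf idx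
  refine ⟨f, fun i i' hii' => inf_mono fun y hy => ?_, fun x hx => ?_⟩
  · obtain ⟨hy, j, hij, hyj⟩ := mem_filter.mp hy
    exact mem_filter.mpr ⟨hy, j, hii'.trans hij, hyj⟩
  obtain ⟨i, hi⟩ := hXc.2 x
  have hfi : f i = idx x := by
    refine le_antisymm (Finset.inf_le (mem_filter.mpr ⟨hx, i, le_rfl, hi⟩))
      (Finset.le_inf fun y hy => ?_)
    obtain ⟨hy, i', hii', hyi'⟩ := mem_filter.mp hy
    exact he.2.2 i i' _ _ x y (mem_inter.mpr ⟨hx, hi⟩) (mem_inter.mpr ⟨hy, hyi'⟩)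
      (hidx x) (hidx y) hii'
  rw [eq_of_mem_em_of_mem_Xc hv (hidx x) hi, ← hfi]
  exact apply_mem_gridEdge

theorem maxAdmissible_eq_image_gridEdge [NeZero g] (hXc : IsPartitionF Xc)
    (hem : IsPartitionF em) : maxAdmissible Xc em = gridEdge v '' {f | Monotone f} := by
  ext e
  constructor
  · rintro ⟨he, hmax⟩
    obtain ⟨f, hf, hsub⟩ := he.exists_monotone_subset_gridEdge hv hXc hem
    exact ⟨f, hf, (hmax _ (isAdmissibleSet_gridEdge hv hXc hem hf) hsub).symm⟩
  · rintro ⟨f, hf, rfl⟩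
    refine ⟨isAdmissibleSet_gridEdge hv hXc hem hf, fun e' he' h => ?_⟩
    refine eq_of_subset_of_card_le h ?_
    rw [card_gridEdge (injective2_of_inter_eq hv hXc hem)]
    exact he'.card_le hXc

end Grid

theorem exists_monotone_update_lt {ι β : Type*} [LinearOrder ι] [PartialOrder β]
    {f f' : ι → β} (hf : Monotone f) (hf' : Monotone f') (h : toLex f < toLex f') :
    ∃ i, f i < f' i ∧ Monotone (update f' i (f i)) ∧
      toLex (update f' i (f i)) < toLex f' := by
  obtain ⟨i, heq, hlt⟩ := h
  refine ⟨i, hlt, fun k k' hkk' => ?_, i, fun j hj => update_of_ne hj.ne _ _,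
    by simpa using hlt⟩
  rcases eq_or_ne k i with rfl | hk
  · rcases eq_or_ne k' k with rfl | hk'
    · exact le_rfl
    · rw [update_self, update_of_ne hk']
      exact hlt.le.trans (hf' hkk')
  · rcases eq_or_ne k' i with rfl | hk'i
    · have hfk : f k = f' k := heq k (hkk'.lt_of_ne hk)
      rw [update_self, update_of_ne hk, ← hfk]
      exact hf hkk'
    · rw [update_of_ne hk, update_of_ne hk'i]
      exact hf' hkk'

theorem pureShellable_compl_gridEdge {d g : ℕ} {v : Fin g → Fin d → V}
    (hv : Injective2 v) :
    PureShellable ((univ \ ·) '' (gridEdge v '' {f | Monotone f})) := by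
  refine ⟨?_, ?_⟩
  · rintro _ ⟨_, ⟨f, -, rfl⟩, rfl⟩ _ ⟨_, ⟨f', -, rfl⟩, rfl⟩
    simp only [card_univ_sdiff, card_gridEdge hv]
  let M := {f : Lex (Fin d → Fin g) // Monotone (ofLex f)}
  have hrange : (univ \ ·) '' (gridEdge v '' {f | Monotone f}) =
      Set.range fun f : M => univ \ gridEdge v (ofLex f.1) := by
    ext G
    simp only [Set.mem_image, Set.mem_ofPred_eq, Set.mem_range, Subtype.exists, M]
    exact ⟨fun ⟨_, ⟨f, hf, rfl⟩, hG⟩ => ⟨toLex f, hf, hG⟩,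
      fun ⟨f, hf, hG⟩ => ⟨_, ⟨f, hf, rfl⟩, hG⟩⟩
  rw [hrange]
  simp only [← compl_eq_univ_sdiff]
  refine shellable_range_of_linearOrder
    (fun f f' h => Subtype.ext (gridEdge_injective hv (compl_injective h))) fun f f' hlt => ?_
  obtain ⟨i, hlt_i, hmono, hupd⟩ := exists_monotone_update_lt f.2 f'.2 hlt
  refine ⟨v (ofLex f.1 i) i, ?_, ⟨toLex (update (ofLex f'.1) i (ofLex f.1 i)), hmono⟩, hupd,
    ?_⟩
  · rw [compl_sdiff_compl, mem_sdiff, apply_mem_gridEdge_iff hv, apply_mem_gridEdge_iff hv]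
    exact ⟨rfl, hlt_i.ne'⟩
  · rw [compl_sdiff_compl]
    exact gridEdge_update_sdiff hv hlt_i.ne

/-- The simplicial complex whose facets are the complements of the edges
of a complete admissible uniform clutter is pure shellable. -/
theorem complete_admissible_uniform_complements_pure_shellable
    {d g : ℕ} (Xc : Fin d → Finset V) (em : Fin g → Finset V)
    (hXc : IsPartitionF Xc) (hem : IsPartitionF em)
    (hcompat : ∀ i j, (em i ∩ Xc j).card = 1) :
    PureShellable ((fun F => Finset.univ \ F) '' maxAdmissible Xc em) := by
  rcases Nat.eq_zero_or_pos g with rfl | hg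
  · have : IsEmpty V := ⟨fun x => (hem.2 x).elim fun i _ => i.elim0⟩
    exact .of_subsingleton fun F _ G _ => Subsingleton.elim F G
  have : NeZero g := ⟨hg.ne'⟩
  choose v hv using fun a i => card_eq_one.mp (hcompat a i)
  rw [maxAdmissible_eq_image_gridEdge hv hXc hem]
  exact pureShellable_compl_gridEdge (injective2_of_inter_eq hv hXc hem)
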